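/- arXiv:2302.11452 — 9 statements merged into one kernel-verified Lean document; each statement's English description precedes it below -/
import Mathlib

section
/- Let A be a type and let γ, θ be setoids (equivalence relations) on A. Form the duplication A(γ) and the setoids θ₀, θ₁, γ₀, η₀, η₁ on A(γ). Then in the lattice Setoid (A(γ)): (1) if γ ≤ θ then θ₀ = θ₁; (2) θ₀ = η₀ ⊔ (θ₀ ⊓ θ₁) and θ₁ = η₁ ⊔ (θ₀ ⊓ θ₁); (3) γ₀ = η₀ ⊔ η₁. -/
/-! Common setup: the lattice `Setoid A` of equivalence relations on `A`,
the duplication `Dup β = {p : A × A // β p.1 p.2}`, the lifted setoids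
`lift0 β θ = θ₀`, `lift1 β θ = θ₁`, the projection kernels `ker0 β = η₀`,
`ker1 β = η₁`, and relational composition `rc`. -/

variable {A : Type*}

/-- The duplication `A(β)`. -/
def Dup (β : Setoid A) : Type _ := {p : A × A // β.r p.1 p.2}

/-- `θ₀`: relate two elements of `A(β)` iff `θ` relates their first coordinates. -/
def lift0 (β θ : Setoid A) : Setoid (Dup β) :=
  ⟨fun x y => θ.r x.1.1 y.1.1,
   ⟨fun _ => θ.refl' _, fun h => θ.symm' h, fun h h' => θ.trans' h h'⟩⟩

/-- `θ₁`: relate two elements of `A(β)` iff `θ` relates their second coordinates. -/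
def lift1 (β θ : Setoid A) : Setoid (Dup β) :=
  ⟨fun x y => θ.r x.1.2 y.1.2,
   ⟨fun _ => θ.refl' _, fun h => θ.symm' h, fun h h' => θ.trans' h h'⟩⟩

/-- `η₀`: kernel of the first projection. -/
def ker0 (β : Setoid A) : Setoid (Dup β) :=
  ⟨fun x y => x.1.1 = y.1.1, ⟨fun _ => rfl, Eq.symm, Eq.trans⟩⟩

/-- `η₁`: kernel of the second projection. -/
def ker1 (β : Setoid A) : Setoid (Dup β) :=
  ⟨fun x y => x.1.2 = y.1.2, ⟨fun _ => rfl, Eq.symm, Eq.trans⟩⟩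

/-- Relational composition. -/
def rc {B : Type*} (r s : B → B → Prop) : B → B → Prop :=
  fun a b => ∃ c, r a c ∧ s c b

theorem Setoid.sup_rel_of_rel_of_rel_of_rel {B : Type*} {r s : Setoid B} {x z w y : B}
    (hxz : r x z) (hzw : s z w) (hwy : r w y) : (r ⊔ s) x y :=
  (r ⊔ s).trans' (le_sup_left (a := r) (b := s) hxz)
    ((r ⊔ s).trans' (le_sup_right (a := r) (b := s) hzw) (le_sup_left (a := r) (b := s) hwy))

section Duplication

variable {β : Setoid A}

def Dup.diag (β : Setoid A) (a : A) : Dup β := ⟨(a, a), β.refl' a⟩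

theorem ker0_le_lift0 (θ : Setoid A) : ker0 β ≤ lift0 β θ := fun x y (h : x.1.1 = y.1.1) =>
  show θ x.1.1 y.1.1 from h ▸ θ.refl' _

theorem ker1_le_lift1 (θ : Setoid A) : ker1 β ≤ lift1 β θ := fun x y (h : x.1.2 = y.1.2) =>
  show θ x.1.2 y.1.2 from h ▸ θ.refl' _

theorem lift0_eq_lift1_of_le {θ : Setoid A} (h : β ≤ θ) : lift0 β θ = lift1 β θ := by
  ext x y
  exact ⟨fun hxy => θ.trans' (θ.symm' (h x.2)) (θ.trans' hxy (h y.2)),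
    fun hxy => θ.trans' (h x.2) (θ.trans' hxy (θ.symm' (h y.2)))⟩

theorem lift0_eq_ker0_sup_inf (θ : Setoid A) :
    lift0 β θ = ker0 β ⊔ (lift0 β θ ⊓ lift1 β θ) := by
  refine le_antisymm (fun x y hxy => ?_) (sup_le (ker0_le_lift0 θ) inf_le_left)
  -- `(a, a') η₀ (a, a) (θ₀ ⊓ θ₁) (b, b) η₀ (b, b')`
  exact Setoid.sup_rel_of_rel_of_rel_of_rel (z := Dup.diag β x.1.1) (w := Dup.diag β y.1.1)
    rfl ⟨hxy, hxy⟩ rfl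

theorem lift1_eq_ker1_sup_inf (θ : Setoid A) :
    lift1 β θ = ker1 β ⊔ (lift0 β θ ⊓ lift1 β θ) := by
  refine le_antisymm (fun x y hxy => ?_) (sup_le (ker1_le_lift1 θ) inf_le_right)
  exact Setoid.sup_rel_of_rel_of_rel_of_rel (z := Dup.diag β x.1.2) (w := Dup.diag β y.1.2)
    rfl ⟨hxy, hxy⟩ rfl

theorem lift0_self_eq_ker0_sup_ker1 : lift0 β β = ker0 β ⊔ ker1 β := by
  have hker1 : ker1 β ≤ lift0 β β := lift0_eq_lift1_of_le le_rfl ▸ ker1_le_lift1 β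
  refine le_antisymm (fun x y hxy => ?_) (sup_le (ker0_le_lift0 β) hker1)
  -- `(a, a') η₀ (a, b) η₁ (b, b) η₀ (b, b')`, where `(a, b) ∈ A(β)` because `β a b`
  exact Setoid.sup_rel_of_rel_of_rel_of_rel (z := ⟨(x.1.1, y.1.1), hxy⟩) (w := Dup.diag β y.1.1)
    rfl rfl rfl

end Duplication

/-- Lemma 3.2, doubling lemma. -/
theorem doubling_lemma (γ θ : Setoid A) :
    (γ ≤ θ → lift0 γ θ = lift1 γ θ) ∧
    lift0 γ θ = ker0 γ ⊔ (lift0 γ θ ⊓ lift1 γ θ) ∧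
    lift1 γ θ = ker1 γ ⊔ (lift0 γ θ ⊓ lift1 γ θ) ∧
    lift0 γ γ = ker0 γ ⊔ ker1 γ :=
  ⟨lift0_eq_lift1_of_le, lift0_eq_ker0_sup_inf θ, lift1_eq_ker1_sup_inf θ,
    lift0_self_eq_ker0_sup_ker1⟩
end

section
/- Let A be a type and let α, β, γ, δ be setoids on A forming a pentagon N5. Form the duplication A(β) over β. Then in Setoid (A(β)): α₀ ⊓ α₁ ≰ α₀ ⊓ γ₁, α₀ ⊓ α₁ ≰ γ₀ ⊓ α₁, and α₀ ⊓ α₁ ≰ γ₀ ⊓ γ₁. -/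
/-! Common setup: the lattice `Setoid A` of equivalence relations on `A`,
the duplication `Dup β = {p : A × A // β p.1 p.2}`, the lifted setoids
`lift0 β θ = θ₀`, `lift1 β θ = θ₁`, the projection kernels `ker0 β = η₀`,
`ker1 β = η₁`, and relational composition `rc`. -/

variable {A : Type*}

/-- `α, β, γ, δ` form a pentagon `N₅` in `Setoid A`. -/
def IsN5 (α β γ δ : Setoid A) : Prop :=
  ⊥ < γ ∧ γ < α ∧ α < δ ∧ α ⊓ β = ⊥ ∧ γ ⊔ β = δ ∧ α ⊔ β = δ ∧ β ≠ ⊥ ∧ β ≠ δ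

theorem inf_le_of_lift0_inf_lift1_le_lift0 {β θ θ' χ : Setoid A}
    (h : lift0 β θ ⊓ lift1 β θ' ≤ lift0 β χ) : θ ⊓ θ' ≤ χ :=
  fun a b hab => @h ⟨(a, a), β.refl' a⟩ ⟨(b, b), β.refl' b⟩ hab

theorem inf_le_of_lift0_inf_lift1_le_lift1 {β θ θ' χ : Setoid A}
    (h : lift0 β θ ⊓ lift1 β θ' ≤ lift1 β χ) : θ ⊓ θ' ≤ χ :=
  fun a b hab => @h ⟨(a, a), β.refl' a⟩ ⟨(b, b), β.refl' b⟩ hab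

/-- Lemma 3.3(2). -/
theorem lemma1_part2 (α β γ δ : Setoid A) (h : IsN5 α β γ δ) :
    ¬ (lift0 β α ⊓ lift1 β α ≤ lift0 β α ⊓ lift1 β γ) ∧
    ¬ (lift0 β α ⊓ lift1 β α ≤ lift0 β γ ⊓ lift1 β α) ∧
    ¬ (lift0 β α ⊓ lift1 β α ≤ lift0 β γ ⊓ lift1 β γ) := by
  have hαγ : ¬ α ⊓ α ≤ γ := by simpa only [inf_idem] using h.2.1.not_ge
  refine ⟨fun hle => hαγ ?_, fun hle => hαγ ?_, fun hle => hαγ ?_⟩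
  · exact inf_le_of_lift0_inf_lift1_le_lift1 (hle.trans inf_le_right)
  · exact inf_le_of_lift0_inf_lift1_le_lift0 (hle.trans inf_le_left)
  · exact inf_le_of_lift0_inf_lift1_le_lift0 (hle.trans inf_le_left)
end

section
/- Let A be a type and let α, β, γ, δ be setoids on A forming a pentagon N5. Form the duplication A(β) over β. If α₀ ⊓ γ₁ and γ₀ ⊓ α₁ are comparable in Setoid (A(β)) (i.e. α₀ ⊓ γ₁ ≤ γ₀ ⊓ α₁ or γ₀ ⊓ α₁ ≤ α₀ ⊓ γ₁), then α₀ ⊓ γ₁ = γ₀ ⊓ α₁ = γ₀ ⊓ γ₁. -/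
/-! Common setup: the lattice `Setoid A` of equivalence relations on `A`,
the duplication `Dup β = {p : A × A // β p.1 p.2}`, the lifted setoids
`lift0 β θ = θ₀`, `lift1 β θ = θ₁`, the projection kernels `ker0 β = η₀`,
`ker1 β = η₁`, and relational composition `rc`. -/

variable {A : Type*}

/-! Swapping the two coordinates of `A(β)` exchanges `θ₀` with `θ₁`, so it carries
`α₀ ⊓ γ₁` onto `γ₀ ⊓ α₁` and back; hence an inclusion between them in one direction
yields the other, and comparability forces equality. The second equality is then pure
lattice theory, using only `γ₁ ≤ α₁`. -/

def Dup.swap {β : Setoid A} (x : Dup β) : Dup β := ⟨(x.1.2, x.1.1), β.symm' x.2⟩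

theorem lift1_mono (β : Setoid A) {θ φ : Setoid A} (h : θ ≤ φ) : lift1 β θ ≤ lift1 β φ :=
  fun _ _ hxy => h hxy

theorem lift0_inf_lift1_le_symm (β : Setoid A) {θ φ : Setoid A}
    (h : lift0 β θ ⊓ lift1 β φ ≤ lift0 β φ ⊓ lift1 β θ) :
    lift0 β φ ⊓ lift1 β θ ≤ lift0 β θ ⊓ lift1 β φ := by
  intro x y ⟨hφ, hθ⟩
  obtain ⟨hφ', hθ'⟩ := h (x := x.swap) (y := y.swap) ⟨hθ, hφ⟩
  exact ⟨hθ', hφ'⟩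

theorem lift0_inf_lift1_eq_of_comparable (β : Setoid A) {θ φ : Setoid A}
    (h : lift0 β θ ⊓ lift1 β φ ≤ lift0 β φ ⊓ lift1 β θ ∨
      lift0 β φ ⊓ lift1 β θ ≤ lift0 β θ ⊓ lift1 β φ) :
    lift0 β θ ⊓ lift1 β φ = lift0 β φ ⊓ lift1 β θ := by
  rcases h with h | h
  · exact le_antisymm h (lift0_inf_lift1_le_symm β h)
  · exact le_antisymm (lift0_inf_lift1_le_symm β h) h

theorem inf_eq_inf_of_inf_eq_of_le {L : Type*} [Lattice L] {a b c d : L} (hdb : d ≤ b)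
    (h : a ⊓ d = c ⊓ b) : c ⊓ b = c ⊓ d :=
  le_antisymm (le_inf inf_le_left (h ▸ inf_le_right)) (inf_le_inf_left c hdb)

/-- Lemma 3.3(3). -/
theorem lemma1_part3 (α β γ δ : Setoid A) (h : IsN5 α β γ δ)
    (hcomp : lift0 β α ⊓ lift1 β γ ≤ lift0 β γ ⊓ lift1 β α ∨
      lift0 β γ ⊓ lift1 β α ≤ lift0 β α ⊓ lift1 β γ) :
    lift0 β α ⊓ lift1 β γ = lift0 β γ ⊓ lift1 β α ∧
    lift0 β γ ⊓ lift1 β α = lift0 β γ ⊓ lift1 β γ := by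
  have hγα : γ ≤ α := h.2.1.le
  have hswap := lift0_inf_lift1_eq_of_comparable β hcomp
  exact ⟨hswap, inf_eq_inf_of_inf_eq_of_le (lift1_mono β hγα) hswap⟩
end

section
/- Let A be a type and let α, β, γ, δ be setoids on A forming a pentagon N5. Then there exist setoids γ', α' on A with γ ≤ γ', α' ≤ α, such that γ' is covered by α' in Setoid A (γ' < α' and no setoid lies strictly between them) and α, β, γ', δ with α replaced by α' again form a pentagon N5, i.e. ⊥ < γ' < α' < δ, α' ⊓ β = ⊥ and γ' ⊔ β = α' ⊔ β = δ. -/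
/-! Common setup: the lattice `Setoid A` of equivalence relations on `A`,
the duplication `Dup β = {p : A × A // β p.1 p.2}`, the lifted setoids
`lift0 β θ = θ₀`, `lift1 β θ = θ₁`, the projection kernels `ker0 β = η₀`,
`ker1 β = η₁`, and relational composition `rc`. -/

variable {A : Type*}

/-! `Setoid A` is compactly generated: a directed supremum of setoids is their union, so the
setoid generated by a single pair is compact. Hence it is weakly atomic: if `γ < α`, choose a
compact `k ≤ α` with `k ≰ γ` and, by Zorn, `γ'` maximal in `[γ, α]` with `k ≰ γ'`; every
element of `[γ, α]` strictly above `γ'` lies above `k`, so `γ' ⋖ γ' ⊔ k =: α' ≤ α`. Moving `γ`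
up and `α` down inside `[γ, α]` keeps the pentagon, since `α' ⊓ β ≤ α ⊓ β = ⊥` and
`δ = γ ⊔ β ≤ γ' ⊔ β ≤ α' ⊔ β ≤ α ⊔ β = δ`. -/

theorem IsCompactElement.exists_le_covBy_sup_le {L : Type*} [CompleteLattice L] {k a b : L}
    (hk : IsCompactElement k) (hka : k ≤ a) (hba : b ≤ a) (hkb : ¬ k ≤ b) :
    ∃ c, b ≤ c ∧ c ⋖ c ⊔ k ∧ c ⊔ k ≤ a := by
  set S := {x | b ≤ x ∧ x ≤ a ∧ ¬ k ≤ x}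
  have hchain : ∀ C ⊆ S, IsChain (· ≤ ·) C → ∀ y ∈ C, ∃ u ∈ S, ∀ z ∈ C, z ≤ u := by
    intro C hCS hC y hy
    refine ⟨sSup C, ⟨(hCS hy).1.trans (le_sSup hy), sSup_le fun z hz => (hCS hz).2.1, ?_⟩,
      fun z => le_sSup⟩
    intro hkC
    obtain ⟨z, hz, hkz⟩ := (CompleteLattice.isCompactElement_iff_le_of_directed_sSup_le L k).1 hk
      C ⟨y, hy⟩ hC.directedOn hkC
    exact (hCS hz).2.2 hkz
  obtain ⟨c, hbc, ⟨-, hca, hkc⟩, hmax⟩ := zorn_le_nonempty₀ S hchain b ⟨le_rfl, hba, hkb⟩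
  refine ⟨c, hbc, ⟨left_lt_sup.2 hkc, fun θ hcθ hθck => ?_⟩, sup_le hca hka⟩
  have hkθ : k ≤ θ := by
    by_contra hkθ
    exact hcθ.not_ge (hmax ⟨hbc.trans hcθ.le, hθck.le.trans (sup_le hca hka), hkθ⟩ hcθ.le)
  exact hθck.not_ge (sup_le hcθ.le hkθ)

theorem exists_le_covBy_le_of_lt {L : Type*} [CompleteLattice L] [IsCompactlyGenerated L]
    {a b : L} (h : b < a) : ∃ c d, b ≤ c ∧ c ⋖ d ∧ d ≤ a := by
  obtain ⟨k, hk, hka, hkb⟩ : ∃ k, IsCompactElement k ∧ k ≤ a ∧ ¬ k ≤ b := by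
    by_contra! hno
    exact h.not_ge (le_iff_compact_le_imp.2 hno)
  obtain ⟨c, hbc, hcov, hle⟩ := hk.exists_le_covBy_sup_le hka h.le hkb
  exact ⟨c, c ⊔ k, hbc, hcov, hle⟩

namespace Setoid

open Relation

theorem rel_sSup_iff_of_directedOn {s : Set (Setoid A)} (hne : s.Nonempty)
    (hs : DirectedOn (· ≤ ·) s) {x y : A} : sSup s x y ↔ ∃ r ∈ s, r x y := by
  refine ⟨fun hxy => ?_, fun ⟨r, hr, hxy⟩ => le_sSup hr hxy⟩
  let u : Setoid A :=
    { r := fun x y => ∃ r ∈ s, r x y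
      iseqv :=
        { refl := fun x => hne.elim fun r hr => ⟨r, hr, r.refl' x⟩
          symm := fun ⟨r, hr, h⟩ => ⟨r, hr, r.symm' h⟩
          trans := fun ⟨r, hr, h⟩ ⟨r', hr', h'⟩ => by
            obtain ⟨t, ht, hrt, hr't⟩ := hs r hr r' hr'
            exact ⟨t, ht, t.trans' (hrt h) (hr't h')⟩ } }
  exact (sSup_le fun r hr _ _ h => ⟨r, hr, h⟩ : sSup s ≤ u) hxy

theorem eqvGen_eq_le_iff {a b : A} {r : Setoid A} :
    EqvGen.setoid (fun x y => x = a ∧ y = b) ≤ r ↔ r a b :=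
  ⟨fun h => h (EqvGen.rel _ _ ⟨rfl, rfl⟩), fun h => eqvGen_le fun _ _ ⟨hx, hy⟩ => hx ▸ hy ▸ h⟩

theorem isCompactElement_eqvGen_eq (a b : A) :
    IsCompactElement (EqvGen.setoid (fun x y => x = a ∧ y = b)) := by
  rw [CompleteLattice.isCompactElement_iff_le_of_directed_sSup_le]
  intro s hne hs hle
  simpa only [eqvGen_eq_le_iff] using (rel_sSup_iff_of_directedOn hne hs).1 (eqvGen_eq_le_iff.1 hle)

instance : IsCompactlyGenerated (Setoid A) where
  exists_sSup_eq r := by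
    refine ⟨{k | ∃ a b, r a b ∧ k = EqvGen.setoid (fun x y => x = a ∧ y = b)}, ?_, ?_⟩
    · rintro _ ⟨a, b, -, rfl⟩
      exact isCompactElement_eqvGen_eq a b
    · refine le_antisymm (sSup_le ?_) fun a b hab => ?_
      · rintro _ ⟨a, b, hab, rfl⟩
        exact eqvGen_eq_le_iff.2 hab
      · exact eqvGen_eq_le_iff.1 (le_sSup ⟨a, b, hab, rfl⟩)

end Setoid

theorem IsN5.of_le_of_lt_of_le {α β γ δ γ' α' : Setoid A} (h : IsN5 α β γ δ) (hγ : γ ≤ γ')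
    (hγα' : γ' < α') (hα : α' ≤ α) : IsN5 α' β γ' δ := by
  obtain ⟨hbot, -, hαδ, hinf, hsupγ, hsupα, hβbot, hβδ⟩ := h
  have hsup : ∀ θ, γ ≤ θ → θ ≤ α → θ ⊔ β = δ := fun θ hγθ hθα =>
    le_antisymm (hsupα ▸ sup_le_sup_right hθα β) (hsupγ ▸ sup_le_sup_right hγθ β)
  exact ⟨hbot.trans_le hγ, hγα', hα.trans_lt hαδ, le_bot_iff.1 (hinf ▸ inf_le_inf_right β hα),
    hsup γ' hγ (hγα'.le.trans hα), hsup α' (hγ.trans hγα'.le) hα, hβbot, hβδ⟩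

/-- weak atomicity refinement of a pentagon. -/
theorem pentagon_with_cover (α β γ δ : Setoid A) (h : IsN5 α β γ δ) :
    ∃ γ' α' : Setoid A, γ ≤ γ' ∧ α' ≤ α ∧ γ' ⋖ α' ∧
      ⊥ < γ' ∧ γ' < α' ∧ α' < δ ∧ α' ⊓ β = ⊥ ∧ γ' ⊔ β = δ ∧ α' ⊔ β = δ := by
  obtain ⟨γ', α', hγ, hcov, hα⟩ := exists_le_covBy_le_of_lt h.2.1
  obtain ⟨hbot, hlt, hαδ, hinf, hsupγ, hsupα, -⟩ := h.of_le_of_lt_of_le hγ hcov.lt hα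
  exact ⟨γ', α', hγ, hα, hcov, hbot, hlt, hαδ, hinf, hsupγ, hsupα⟩
end

section
/- Let A be a type and let α, β, γ, δ be setoids on A forming a pentagon N5. Form the duplication A(β) over β. Then α₀ ⊓ γ₁ and γ₀ ⊓ α₁ are comparable in Setoid (A(β)) if and only if (β∘γ∘β) ∩ α ⊆ γ, i.e. if and only if for all a, b in A, whenever α a b holds and there exist x, y with β a x, γ x y and β y b, then γ a b holds. -/
/-! Common setup: the lattice `Setoid A` of equivalence relations on `A`,
the duplication `Dup β = {p : A × A // β p.1 p.2}`, the lifted setoids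
`lift0 β θ = θ₀`, `lift1 β θ = θ₁`, the projection kernels `ker0 β = η₀`,
`ker1 β = η₁`, and relational composition `rc`. -/

variable {A : Type*}

/-! Since `γ ≤ α`, each of the two inequalities holds automatically in one coordinate; in the
other coordinate, tested on pairs `(a, x)`, `(b, y)`, it says exactly `(β∘γ∘β) ∩ α ⊆ γ`. -/

section Duplication

variable {α γ : Setoid A} (β : Setoid A)

theorem lift0_mono (hγα : γ ≤ α) : lift0 β γ ≤ lift0 β α :=
  Setoid.le_def.mpr fun h => Setoid.le_def.mp hγα h

theorem lift1_mono_s9 (hγα : γ ≤ α) : lift1 β γ ≤ lift1 β α :=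
  Setoid.le_def.mpr fun h => Setoid.le_def.mp hγα h

variable (α γ)

theorem lift0_inf_lift1_le_lift0_iff :
    lift0 β α ⊓ lift1 β γ ≤ lift0 β γ ↔
      ∀ a b : A, α.r a b → (∃ x y : A, β.r a x ∧ γ.r x y ∧ β.r y b) → γ.r a b := by
  constructor
  · rintro hle a b hab ⟨x, y, hax, hxy, hyb⟩
    exact Setoid.le_def.mp hle (x := ⟨(a, x), hax⟩) (y := ⟨(b, y), β.symm' hyb⟩) ⟨hab, hxy⟩
  · rintro hbgb ⟨⟨a, x⟩, hax⟩ ⟨⟨b, y⟩, hby⟩ ⟨hab, hxy⟩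
    exact hbgb a b hab ⟨x, y, hax, hxy, β.symm' hby⟩

theorem lift0_inf_lift1_mono_iff :
    lift0 β γ ⊓ lift1 β α ≤ lift1 β γ ↔
      ∀ a b : A, α.r a b → (∃ x y : A, β.r a x ∧ γ.r x y ∧ β.r y b) → γ.r a b := by
  constructor
  · rintro hle a b hab ⟨x, y, hax, hxy, hyb⟩
    exact Setoid.le_def.mp hle (x := ⟨(x, a), β.symm' hax⟩) (y := ⟨(y, b), hyb⟩) ⟨hxy, hab⟩
  · rintro hbgb ⟨⟨x, a⟩, hxa⟩ ⟨⟨y, b⟩, hyb⟩ ⟨hxy, hab⟩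
    exact hbgb a b hab ⟨x, y, β.symm' hxa, hxy, hyb⟩

end Duplication

/-- Theorem 1.2 criterion: comparability iff `(β∘γ∘β) ∩ α ⊆ γ`. -/
theorem comparable_iff_bgb (α β γ δ : Setoid A) (h : IsN5 α β γ δ) :
    (lift0 β α ⊓ lift1 β γ ≤ lift0 β γ ⊓ lift1 β α ∨
      lift0 β γ ⊓ lift1 β α ≤ lift0 β α ⊓ lift1 β γ) ↔
    (∀ a b : A, α.r a b → (∃ x y : A, β.r a x ∧ γ.r x y ∧ β.r y b) →
      γ.r a b) := by
  have hγα : γ ≤ α := h.2.1.le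
  have hleft : lift0 β α ⊓ lift1 β γ ≤ lift1 β α :=
    inf_le_right.trans (lift1_mono_s9 β hγα)
  have hright : lift0 β γ ⊓ lift1 β α ≤ lift0 β α :=
    inf_le_left.trans (lift0_mono β hγα)
  rw [le_inf_iff, le_inf_iff, and_iff_left hleft, and_iff_right hright,
    lift0_inf_lift1_le_lift0_iff, lift0_inf_lift1_mono_iff, or_self]
end

section
/- Let A be a type and let α, β, γ be setoids on A with γ ≤ α. Then there exists a pair in ((β∘γ∘β) ∩ α) \ γ if and only if there exists a pair in ((β∘γ∘β∘γ) ∩ α) \ γ or a pair in ((γ∘β∘γ∘β) ∩ α) \ γ. Equivalently: (β∘γ∘β) ∩ α ⊆ γ iff both (β∘γ∘β∘γ) ∩ α ⊆ γ and (γ∘β∘γ∘β) ∩ α ⊆ γ. -/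
/-! Common setup: the lattice `Setoid A` of equivalence relations on `A`,
the duplication `Dup β = {p : A × A // β p.1 p.2}`, the lifted setoids
`lift0 β θ = θ₀`, `lift1 β θ = θ₁`, the projection kernels `ker0 β = η₀`,
`ker1 β = η₁`, and relational composition `rc`. -/

variable {A : Type*}

/-! Since `γ ≤ α` and `γ` is transitive, a pair `(a, b)` of `(ρ ∘ γ) ∩ α` outside `γ`, witnessed by
`ρ a e`, `γ e b`, yields the pair `(a, e)` of `ρ ∩ α` outside `γ`; conversely `ρ ⊆ ρ ∘ γ` by
reflexivity. So composing with `γ` on either side does not change whether `ρ ∩ α ⊆ γ`. As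
`β∘γ∘β∘γ = (β∘γ∘β)∘γ` and `γ∘β∘γ∘β = γ∘(β∘γ∘β)`, all three conditions are the same. -/

theorem rc_assoc {B : Type*} (r s t : B → B → Prop) : rc (rc r s) t = rc r (rc s t) :=
  Relation.comp_assoc

section

variable {B : Type*} {α γ : Setoid B}

theorem exists_rc_right_iff (hγα : γ ≤ α) (ρ : B → B → Prop) :
    (∃ a b, rc ρ γ.r a b ∧ α.r a b ∧ ¬ γ.r a b) ↔ ∃ a b, ρ a b ∧ α.r a b ∧ ¬ γ.r a b := by
  constructor
  · rintro ⟨a, b, ⟨e, hae, heb⟩, hab, hγab⟩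
    exact ⟨a, e, hae, α.trans' hab (α.symm' (hγα heb)), fun hγae => hγab (γ.trans' hγae heb)⟩
  · rintro ⟨a, b, hab, hαab, hγab⟩
    exact ⟨a, b, ⟨b, hab, γ.refl' b⟩, hαab, hγab⟩

theorem exists_rc_left_iff (hγα : γ ≤ α) (ρ : B → B → Prop) :
    (∃ a b, rc γ.r ρ a b ∧ α.r a b ∧ ¬ γ.r a b) ↔ ∃ a b, ρ a b ∧ α.r a b ∧ ¬ γ.r a b := by
  constructor
  · rintro ⟨a, b, ⟨c, hac, hcb⟩, hab, hγab⟩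
    exact ⟨c, b, hcb, α.trans' (α.symm' (hγα hac)) hab, fun hγcb => hγab (γ.trans' hac hγcb)⟩
  · rintro ⟨a, b, hab, hαab, hγab⟩
    exact ⟨a, b, ⟨a, γ.refl' a, hab⟩, hαab, hγab⟩

end

theorem forall_imp_imp_iff_not_exists {B : Type*} (r s t : B → B → Prop) :
    (∀ a b, r a b → s a b → t a b) ↔ ¬ ∃ a b, r a b ∧ s a b ∧ ¬ t a b := by
  simp only [not_exists, not_and, not_not]

/-- 3-fold versus 4-fold alternating products. -/
theorem bgb_iff_four (α β γ : Setoid A) (hγα : γ ≤ α) :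
    ((∃ a b : A, rc β.r (rc γ.r β.r) a b ∧ α.r a b ∧ ¬ γ.r a b) ↔
      ((∃ a b : A, rc β.r (rc γ.r (rc β.r γ.r)) a b ∧ α.r a b ∧ ¬ γ.r a b) ∨
       (∃ a b : A, rc γ.r (rc β.r (rc γ.r β.r)) a b ∧ α.r a b ∧ ¬ γ.r a b))) ∧
    ((∀ a b : A, rc β.r (rc γ.r β.r) a b → α.r a b → γ.r a b) ↔
      ((∀ a b : A, rc β.r (rc γ.r (rc β.r γ.r)) a b → α.r a b → γ.r a b) ∧
       (∀ a b : A, rc γ.r (rc β.r (rc γ.r β.r)) a b → α.r a b → γ.r a b))) := by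
  have hbgbg : rc β.r (rc γ.r (rc β.r γ.r)) = rc (rc β.r (rc γ.r β.r)) γ.r := by
    rw [rc_assoc, rc_assoc]
  simp only [forall_imp_imp_iff_not_exists, hbgbg, exists_rc_right_iff hγα,
    exists_rc_left_iff hγα, or_self, and_self]
end

section
/- Let A be a type and let α, β, γ, δ be setoids on A forming a diamond M3 with bottom ⊥. Form the duplication A(γ) over γ. Then the following are equivalent in Setoid (A(γ)): (1) α₀ ⊓ β₁ and β₀ ⊓ α₁ are comparable (one is ≤ the other); (2) α₀ ⊓ β₁ = β₀ ⊓ α₁ = ⊥. -/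
/-! Common setup: the lattice `Setoid A` of equivalence relations on `A`,
the duplication `Dup β = {p : A × A // β p.1 p.2}`, the lifted setoids
`lift0 β θ = θ₀`, `lift1 β θ = θ₁`, the projection kernels `ker0 β = η₀`,
`ker1 β = η₁`, and relational composition `rc`. -/

variable {A : Type*}

/-- `α, β, γ, δ` form a diamond `M₃` with bottom `⊥` in `Setoid A`. -/
def IsM3 (α β γ δ : Setoid A) : Prop :=
  α ⊓ β = ⊥ ∧ α ⊓ γ = ⊥ ∧ β ⊓ γ = ⊥ ∧
  α ⊔ β = δ ∧ α ⊔ γ = δ ∧ β ⊔ γ = δ ∧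
  α ≠ β ∧ α ≠ γ ∧ β ≠ γ ∧
  α ≠ ⊥ ∧ β ≠ ⊥ ∧ γ ≠ ⊥ ∧ α ≠ δ ∧ β ≠ δ ∧ γ ≠ δ

/-
Since `α ⊓ β = ⊥`, a pair related by `α₀ ⊓ β₁` and `β₀ ⊓ α₁` has both coordinates related by
`α ⊓ β`, so the two meets intersect in `⊥`. The coordinate swap `(a, b) ↦ (b, a)` is an
automorphism of `A(γ)` exchanging `α₀ ⊓ β₁` and `β₀ ⊓ α₁`, so if one is below the other they
are equal, and then each equals their meet `⊥`.
-/

namespace Dup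

variable {γ : Setoid A}

def swap_s11 (x : Dup γ) : Dup γ := ⟨(x.1.2, x.1.1), γ.symm' x.2⟩

theorem lift0_swap {θ : Setoid A} {x y : Dup γ} : lift0 γ θ x.swap_s11 y.swap_s11 ↔ lift1 γ θ x y :=
  Iff.rfl

theorem lift1_swap {θ : Setoid A} {x y : Dup γ} : lift1 γ θ x.swap_s11 y.swap_s11 ↔ lift0 γ θ x y :=
  Iff.rfl

end Dup

section

variable {γ : Setoid A}

theorem lift0_inf (α β : Setoid A) : lift0 γ (α ⊓ β) = lift0 γ α ⊓ lift0 γ β := rfl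

theorem lift1_inf (α β : Setoid A) : lift1 γ (α ⊓ β) = lift1 γ α ⊓ lift1 γ β := rfl

theorem lift0_bot_inf_lift1_bot : lift0 γ ⊥ ⊓ lift1 γ ⊥ = ⊥ :=
  le_bot_iff.mp fun _ _ hxy => Subtype.ext (Prod.ext hxy.1 hxy.2)

theorem lift0_inf_lift1_inf_lift0_inf_lift1_eq_bot {α β : Setoid A} (hαβ : α ⊓ β = ⊥) :
    (lift0 γ α ⊓ lift1 γ β) ⊓ (lift0 γ β ⊓ lift1 γ α) = ⊥ :=
  calc (lift0 γ α ⊓ lift1 γ β) ⊓ (lift0 γ β ⊓ lift1 γ α)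
      = lift0 γ (α ⊓ β) ⊓ lift1 γ (α ⊓ β) := by
        rw [lift0_inf, lift1_inf]; ac_rfl
    _ = ⊥ := by rw [hαβ, lift0_bot_inf_lift1_bot]

theorem lift0_inf_lift1_le_of_le {α β : Setoid A}
    (hle : lift0 γ α ⊓ lift1 γ β ≤ lift0 γ β ⊓ lift1 γ α) :
    lift0 γ β ⊓ lift1 γ α ≤ lift0 γ α ⊓ lift1 γ β := fun _ _ hxy =>
  have h := hle ⟨Dup.lift0_swap.mpr hxy.2, Dup.lift1_swap.mpr hxy.1⟩
  ⟨Dup.lift1_swap.mp h.2, Dup.lift0_swap.mp h.1⟩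

theorem lift0_inf_lift1_eq_of_le {α β : Setoid A}
    (hle : lift0 γ α ⊓ lift1 γ β ≤ lift0 γ β ⊓ lift1 γ α) :
    lift0 γ α ⊓ lift1 γ β = lift0 γ β ⊓ lift1 γ α :=
  le_antisymm hle (lift0_inf_lift1_le_of_le hle)

end

/-- Lemma 4.1. -/
theorem nozero (α β γ δ : Setoid A) (h : IsM3 α β γ δ) :
    (lift0 γ α ⊓ lift1 γ β ≤ lift0 γ β ⊓ lift1 γ α ∨
      lift0 γ β ⊓ lift1 γ α ≤ lift0 γ α ⊓ lift1 γ β) ↔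
    (lift0 γ α ⊓ lift1 γ β = ⊥ ∧ lift0 γ β ⊓ lift1 γ α = ⊥) := by
  constructor
  · intro hcomparable
    have heq : lift0 γ α ⊓ lift1 γ β = lift0 γ β ⊓ lift1 γ α :=
      hcomparable.elim lift0_inf_lift1_eq_of_le fun hle => (lift0_inf_lift1_eq_of_le hle).symm
    have hbot := lift0_inf_lift1_inf_lift0_inf_lift1_eq_bot (γ := γ) h.1
    rw [← heq, inf_idem] at hbot
    exact ⟨hbot, heq ▸ hbot⟩
  · rintro ⟨hαβ, hβα⟩
    exact Or.inl (hαβ ▸ hβα ▸ le_rfl)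
end

section
/- Let A be a type and let α, β, γ, δ be setoids on A forming a pairwise permuting diamond M3 with bottom ⊥. Form the duplication A(γ) over γ. Then in Setoid (A(γ)): η₀ ∘ (α₀ ⊓ β₁) = η₀ ⊔ (α₀ ⊓ β₁) = α₀, and η₀ ∘ (α₀ ⊓ α₁) = η₀ ⊔ (α₀ ⊓ α₁) = α₀. -/
/-! Common setup: the lattice `Setoid A` of equivalence relations on `A`,
the duplication `Dup β = {p : A × A // β p.1 p.2}`, the lifted setoids
`lift0 β θ = θ₀`, `lift1 β θ = θ₁`, the projection kernels `ker0 β = η₀`,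
`ker1 β = η₁`, and relational composition `rc`. -/

variable {A : Type*}

/-- The diamond is pairwise permuting. -/
def M3Permutes (α β γ : Setoid A) : Prop :=
  rc α.r β.r = rc β.r α.r ∧ rc α.r γ.r = rc γ.r α.r ∧
  rc β.r γ.r = rc γ.r β.r

/-! In the duplication `A(γ)`, two pairs `(a, b)` and `(c, d)` with `α a c` are linked through
`(a, f)` by `η₀ ∘ (α₀ ⊓ θ₁)` as soon as some `f` satisfies `γ a f` and `θ f d`, that is, as soon as
`α ∘ γ ≤ γ ∘ θ`. For `θ = α` this is the permutability of `α` and `γ`; for `θ = β` it follows from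
`α ∘ γ = α ⊔ γ = δ = β ⊔ γ = γ ∘ β`, joins of permuting equivalences being their composites.
Since `η₀ ⊔ (α₀ ⊓ θ₁) ≤ α₀` anyway, the composite `η₀ ∘ (α₀ ⊓ θ₁)` is then both `α₀` and the join. -/

theorem sup_eq_of_rc_eq {r s t : Setoid A} (h : rc r.r s.r = t.r) : r ⊔ s = t := by
  apply le_antisymm
  · refine sup_le (fun a b hab => ?_) (fun a b hab => ?_)
    · exact h ▸ ⟨b, hab, s.refl' b⟩
    · exact h ▸ ⟨a, r.refl' a, hab⟩
  · intro a b hab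
    obtain ⟨c, hac, hcb⟩ := h ▸ hab
    exact (r ⊔ s).trans' (le_sup_left (b := s) hac) (le_sup_right (a := r) hcb)

theorem sup_r_eq_rc_of_permute {r s : Setoid A} (h : rc r.r s.r = rc s.r r.r) :
    (r ⊔ s).r = rc r.r s.r := by
  let t : Setoid A :=
    { r := rc r.r s.r
      iseqv :=
        { refl := fun a => ⟨a, r.refl' a, s.refl' a⟩
          symm := fun ⟨c, hac, hcb⟩ => h ▸ ⟨c, s.symm' hcb, r.symm' hac⟩
          trans := fun ⟨x, hax, hxb⟩ ⟨y, hby, hyc⟩ => by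
            have hxy : rc s.r r.r x y := ⟨_, hxb, hby⟩
            rw [← h] at hxy
            obtain ⟨v, hxv, hvy⟩ := hxy
            exact ⟨v, r.trans' hax hxv, s.trans' hvy hyc⟩ } }
  rw [sup_eq_of_rc_eq (t := t) rfl]
  rfl

theorem rc_ker0_lift0_inf_lift1 {α γ θ : Setoid A} (h : rc α.r γ.r ≤ rc γ.r θ.r) :
    rc (ker0 γ).r (lift0 γ α ⊓ lift1 γ θ).r = (lift0 γ α).r := by
  ext ⟨⟨a, b⟩, -⟩ ⟨⟨c, d⟩, hcd⟩
  constructor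
  · rintro ⟨z, rfl, hzc, -⟩
    exact hzc
  · intro hac
    obtain ⟨f, haf, hfd⟩ := h a d ⟨c, hac, hcd⟩
    exact ⟨⟨(a, f), haf⟩, rfl, hac, hfd⟩

/-- Lemma 4.2(1),(2). -/
theorem permute_lemma_12 (α β γ δ : Setoid A) (h : IsM3 α β γ δ)
    (hperm : M3Permutes α β γ) :
    rc (ker0 γ).r (lift0 γ α ⊓ lift1 γ β).r =
      (ker0 γ ⊔ (lift0 γ α ⊓ lift1 γ β)).r ∧
    ker0 γ ⊔ (lift0 γ α ⊓ lift1 γ β) = lift0 γ α ∧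
    rc (ker0 γ).r (lift0 γ α ⊓ lift1 γ α).r =
      (ker0 γ ⊔ (lift0 γ α ⊓ lift1 γ α)).r ∧
    ker0 γ ⊔ (lift0 γ α ⊓ lift1 γ α) = lift0 γ α := by
  obtain ⟨-, -, -, -, hαγ, hβγ, -⟩ := h
  obtain ⟨-, permαγ, permβγ⟩ := hperm
  have hβ : rc α.r γ.r = rc γ.r β.r := by
    rw [← sup_r_eq_rc_of_permute permαγ, hαγ, ← hβγ, sup_r_eq_rc_of_permute permβγ, permβγ]
  have compβ := rc_ker0_lift0_inf_lift1 hβ.le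
  have compα := rc_ker0_lift0_inf_lift1 permαγ.le
  rw [sup_eq_of_rc_eq compβ, sup_eq_of_rc_eq compα]
  exact ⟨compβ, rfl, compα, rfl⟩
end

section
/- Let A be a type and let α, β, γ, δ be setoids on A forming a pairwise permuting diamond M3 with bottom ⊥. Form the duplication A(γ) over γ. Then in Setoid (A(γ)): (α₀ ⊓ β₁) ∘ (α₀ ⊓ α₁) = (α₀ ⊓ β₁) ⊔ (α₀ ⊓ α₁) = α₀. -/
/-! Common setup: the lattice `Setoid A` of equivalence relations on `A`,
the duplication `Dup β = {p : A × A // β p.1 p.2}`, the lifted setoids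
`lift0 β θ = θ₀`, `lift1 β θ = θ₁`, the projection kernels `ker0 β = η₀`,
`ker1 β = η₁`, and relational composition `rc`. -/

variable {A : Type*}

/-! Let `x = (a, b)` and `y = (a', b')` in `A(γ)` with `a α a'`. Then `b γ a α a' γ b'`, so
`b (α ⊔ γ) b'`, and `α ⊔ γ = δ = α ⊔ β = β ∘ α` by permutability: `b β c₂ α b'`. Now
`a' γ b' α c₂`, so `(a', c₂) ∈ γ ∘ α = α ∘ γ`: `a' α c₁ γ c₂`. The element `(c₁, c₂)` of `A(γ)`
witnesses `(x, y) ∈ (α₀ ⊓ β₁) ∘ (α₀ ⊓ α₁)`, and the reverse inclusions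
`(α₀ ⊓ β₁) ∘ (α₀ ⊓ α₁) ⊆ (α₀ ⊓ β₁) ⊔ (α₀ ⊓ α₁) ⊆ α₀` are automatic. -/

section Composition

variable {B : Type*} {r s : Setoid B}

theorem rc_le_sup {x y : B} (h : rc r.r s.r x y) : (r ⊔ s).r x y := by
  obtain ⟨c, hxc, hcy⟩ := h
  exact (r ⊔ s).trans' (Setoid.le_def.mp le_sup_left hxc) (Setoid.le_def.mp le_sup_right hcy)

def Setoid.rcOfPermute (hp : rc r.r s.r = rc s.r r.r) : Setoid B where
  r := rc r.r s.r
  iseqv := by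
    refine ⟨fun x => ⟨x, r.refl' x, s.refl' x⟩, fun {x y} h => ?_, fun {x y z} hxy hyz => ?_⟩
    · obtain ⟨c, hxc, hcy⟩ := h
      rw [hp]
      exact ⟨c, s.symm' hcy, r.symm' hxc⟩
    · obtain ⟨c, hxc, hcy⟩ := hxy
      obtain ⟨d, hyd, hdz⟩ := hyz
      obtain ⟨e, hce, hed⟩ : rc r.r s.r c d := hp ▸ ⟨y, hcy, hyd⟩
      exact ⟨e, r.trans' hxc hce, s.trans' hed hdz⟩

theorem rc_of_sup_of_permute (hp : rc r.r s.r = rc s.r r.r) {x y : B} (h : (r ⊔ s).r x y) :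
    rc r.r s.r x y := by
  have hle : r ⊔ s ≤ Setoid.rcOfPermute hp :=
    sup_le (Setoid.le_def.mpr fun h => ⟨_, h, s.refl' _⟩)
      (Setoid.le_def.mpr fun h => ⟨_, r.refl' _, h⟩)
  exact Setoid.le_def.mp hle h

theorem rc_eq_sup_and_sup_eq {t : Setoid B} (hr : r ≤ t) (hs : s ≤ t)
    (ht : ∀ {x y}, t.r x y → rc r.r s.r x y) : rc r.r s.r = (r ⊔ s).r ∧ r ⊔ s = t := by
  have hsup : r ⊔ s = t := le_antisymm (sup_le hr hs) (Setoid.le_def.mpr fun h => rc_le_sup (ht h))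
  refine ⟨?_, hsup⟩
  funext x y
  exact propext ⟨rc_le_sup, fun h => ht (hsup ▸ h)⟩

end Composition

theorem rc_of_lift0_rel {α β γ : Setoid A} (hle : α ⊔ γ ≤ α ⊔ β)
    (hαβ : rc α.r β.r = rc β.r α.r) (hαγ : rc α.r γ.r = rc γ.r α.r) {x y : Dup γ}
    (hxy : (lift0 γ α).r x y) : rc (lift0 γ α ⊓ lift1 γ β).r (lift0 γ α ⊓ lift1 γ α).r x y := by
  obtain ⟨⟨a, b⟩, hab⟩ := x
  obtain ⟨⟨a', b'⟩, hab'⟩ := y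
  change α.r a a' at hxy
  have hbb' : (α ⊔ γ).r b b' := by
    have hγ : γ ≤ α ⊔ γ := le_sup_right
    exact (α ⊔ γ).trans' ((α ⊔ γ).trans' (Setoid.le_def.mp hγ (γ.symm' hab))
      (Setoid.le_def.mp le_sup_left hxy)) (Setoid.le_def.mp hγ hab')
  obtain ⟨c₂, hbc₂, hc₂b'⟩ : rc β.r α.r b b' :=
    hαβ ▸ rc_of_sup_of_permute hαβ (Setoid.le_def.mp hle hbb')
  obtain ⟨c₁, ha'c₁, hc₁c₂⟩ : rc α.r γ.r a' c₂ := hαγ ▸ ⟨b', hab', α.symm' hc₂b'⟩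
  exact ⟨⟨(c₁, c₂), hc₁c₂⟩, ⟨α.trans' hxy ha'c₁, hbc₂⟩, ⟨α.symm' ha'c₁, hc₂b'⟩⟩

/-- Lemma 4.2(3). -/
theorem permute_lemma_3 (α β γ δ : Setoid A) (h : IsM3 α β γ δ)
    (hperm : M3Permutes α β γ) :
    rc (lift0 γ α ⊓ lift1 γ β).r (lift0 γ α ⊓ lift1 γ α).r =
      ((lift0 γ α ⊓ lift1 γ β) ⊔ (lift0 γ α ⊓ lift1 γ α)).r ∧
    (lift0 γ α ⊓ lift1 γ β) ⊔ (lift0 γ α ⊓ lift1 γ α) = lift0 γ α := by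
  obtain ⟨-, -, -, hαβ, hαγ, -⟩ := h
  obtain ⟨pαβ, pαγ, -⟩ := hperm
  exact rc_eq_sup_and_sup_eq inf_le_left inf_le_left
    (rc_of_lift0_rel (hαγ.trans hαβ.symm).le pαβ pαγ)
end
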